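/- Let n ≥ 2, let p ∈ (0,∞) with p ≠ 1, and fix 0 < a < ∞. There exists a constant D, depending only on n, p and a, with the following property: for every convex body K in ℝ^n with V(K) = ω_n, if x is an interior point of K satisfying ∫_{S^{n−1}} (h_K(u) − ⟨x,u⟩)^{p−1} u dσ(u) = 0 and ∫_{S^{n−1}} (h_K(u) − ⟨x,u⟩)^p dσ(u) ≤ a, then the diameter of K is at most D. -/

import Mathlib

open MeasureTheory Metric Filter

noncomputable section

/-- The support function of a set `K ⊆ ℝⁿ`, as a function of `u`:
`h_K(u) = sup { ⟨y, u⟩ : y ∈ K }`. -/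
def suppFn {n : ℕ} (K : Set (EuclideanSpace ℝ (Fin n))) (u : EuclideanSpace ℝ (Fin n)) : ℝ :=
  sSup ((fun y => (inner ℝ y u : ℝ)) '' K)

/-- The spherical Lebesgue measure `σ` on the unit sphere `S^{n-1} ⊆ ℝⁿ`. -/
def sphMeasure (n : ℕ) : Measure (sphere (0 : EuclideanSpace ℝ (Fin n)) 1) :=
  (volume : Measure (EuclideanSpace ℝ (Fin n))).toSphere

/-!
Write `f u = h_K(u) - ⟪x, u⟫`, which is positive because `x` is interior. The centring condition
says `∫ f^(p-1) ⟪w, u⟫ dσ = 0` for every `w`, hence `∫ f^(p-1) (h_K(u) - ⟪y, u⟫) dσ = ∫ f^p dσ ≤ a`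
for every `y ∈ K`. Adding this for the two endpoints `z₁, z₂` of a diameter `w = z₂ - z₁` gives
`∫ f^(p-1) |⟪w, u⟫| dσ ≤ 2a`. Conversely this integral is at least `γ ‖w‖^p` with `γ = γ(n, p) > 0`:
for `p ≤ 1` because `f ≤ d(K) = ‖w‖`, and for `p ≥ 1` because `f(u) + f(-u) ≥ |⟪w, u⟫|` and `σ` is
symmetric; in both cases `∫ |⟪w, u⟫|^q dσ = c_q ‖w‖^q` by rotation invariance of `σ`.
-/

open Set Topology
open scoped RealInnerProductSpace Pointwise

theorem IsCompact.exists_dist_eq_diam {α : Type*} [PseudoMetricSpace α] {s : Set α}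
    (hs : IsCompact s) (hne : s.Nonempty) : ∃ x ∈ s, ∃ y ∈ s, dist x y = diam s := by
  obtain ⟨⟨x, y⟩, hxy, hmax⟩ :=
    (hs.prod hs).exists_isMaxOn (hne.prod hne) continuous_dist.continuousOn
  refine ⟨x, hxy.1, y, hxy.2, le_antisymm (dist_le_diam_of_mem hs.isBounded hxy.1 hxy.2) ?_⟩
  exact diam_le_of_forall_dist_le dist_nonneg fun a ha b hb => hmax (mk_mem_prod ha hb)

theorem Real.rpow_le_two_rpow_mul_add_mul {p x y t : ℝ} (hp : 1 ≤ p) (hx : 0 ≤ x) (hy : 0 ≤ y)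
    (ht : 0 ≤ t) (htxy : t ≤ x + y) : t ^ p ≤ 2 ^ (p - 1) * (x ^ (p - 1) + y ^ (p - 1)) * t := by
  have hp' : 0 ≤ p - 1 := by linarith
  have hmax : max x y ^ (p - 1) ≤ x ^ (p - 1) + y ^ (p - 1) := by
    rcases max_choice x y with h | h <;> rw [h] <;>
      linarith [rpow_nonneg hx (p - 1), rpow_nonneg hy (p - 1)]
  calc t ^ p = t ^ (p - 1) * t := by rw [← rpow_add_one' ht (by linarith), sub_add_cancel]
    _ ≤ (2 * max x y) ^ (p - 1) * t := by
        gcongr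
        linarith [le_max_left x y, le_max_right x y]
    _ ≤ 2 ^ (p - 1) * (x ^ (p - 1) + y ^ (p - 1)) * t := by
        rw [mul_rpow zero_le_two (le_max_of_le_left hx)]
        gcongr

section Sphere

variable {E : Type*} [NormedAddCommGroup E] [InnerProductSpace ℝ E] [FiniteDimensional ℝ E]
  [MeasurableSpace E] [BorelSpace E]

local notation "σ" => Measure.toSphere (volume : Measure E)

def LinearIsometryEquiv.sphereHomeomorph (e : E ≃ₗᵢ[ℝ] E) :
    sphere (0 : E) 1 ≃ₜ sphere (0 : E) 1 :=
  e.toHomeomorph.subtype fun x => by simp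

theorem LinearIsometryEquiv.measurePreserving_sphereHomeomorph (e : E ≃ₗᵢ[ℝ] E) :
    MeasurePreserving e.sphereHomeomorph σ σ := by
  refine ⟨e.sphereHomeomorph.continuous.measurable, Measure.ext fun s hs => ?_⟩
  -- `toSphere` measures `s` by the volume of the cone `Ioo 0 1 • s`, and `e` preserves cones.
  have hpre : Ioo (0 : ℝ) 1 • ((↑) '' (e.sphereHomeomorph ⁻¹' s) : Set E) =
      e ⁻¹' (Ioo (0 : ℝ) 1 • ((↑) '' s)) := by
    ext x
    simp only [Set.mem_smul, mem_image, mem_preimage]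
    constructor
    · rintro ⟨r, hr, _, ⟨u, hu, rfl⟩, rfl⟩
      exact ⟨r, hr, _, ⟨_, hu, rfl⟩, by simp [LinearIsometryEquiv.sphereHomeomorph]⟩
    · rintro ⟨r, hr, _, ⟨u, hu, rfl⟩, hx⟩
      refine ⟨r, hr, _, ⟨e.sphereHomeomorph.symm u, by simpa using hu, rfl⟩, ?_⟩
      apply e.injective
      simp [LinearIsometryEquiv.sphereHomeomorph, hx]
  rw [Measure.map_apply e.sphereHomeomorph.continuous.measurable hs,
    Measure.toSphere_apply' _ (e.sphereHomeomorph.continuous.measurable hs),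
    Measure.toSphere_apply' _ hs, hpre]
  exact congrArg _ (MeasurePreserving.measure_preimage_equiv
    (f := e.toHomeomorph.toMeasurableEquiv) e.measurePreserving _)

theorem LinearIsometryEquiv.integral_comp_sphereHomeomorph (e : E ≃ₗᵢ[ℝ] E)
    (φ : sphere (0 : E) 1 → ℝ) :
    ∫ u, φ (e.sphereHomeomorph u) ∂σ =
      ∫ u, φ u ∂σ :=
  (e.measurePreserving_sphereHomeomorph).integral_comp'
    (f := e.sphereHomeomorph.toMeasurableEquiv) φ

theorem integral_comp_neg_sphere (φ : sphere (0 : E) 1 → ℝ) :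
    ∫ u, φ (-u) ∂σ = ∫ u, φ u ∂σ :=
  (LinearIsometryEquiv.neg ℝ).integral_comp_sphereHomeomorph φ

theorem integral_comp_inner_sphere_eq (φ : ℝ → ℝ) {v w : E} (hv : ‖v‖ = 1) (hw : ‖w‖ = 1) :
    ∫ u : sphere (0 : E) 1, φ ⟪v, u⟫ ∂σ = ∫ u : sphere (0 : E) 1, φ ⟪w, u⟫ ∂σ := by
  set e := (ℝ ∙ (v - w))ᗮ.reflection
  have hev : e v = w := Submodule.reflection_sub (by rw [hv, hw])
  rw [← e.integral_comp_sphereHomeomorph (fun u => φ ⟪w, u⟫)]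
  simp [LinearIsometryEquiv.sphereHomeomorph, ← hev, e.inner_map_map]

theorem Continuous.integrable_toSphere {G : Type*} [NormedAddCommGroup G]
    {φ : sphere (0 : E) 1 → G} (hφ : Continuous φ) : Integrable φ σ :=
  hφ.integrable_of_hasCompactSupport (.of_compactSpace φ)

theorem exists_integral_abs_inner_rpow_eq [Nontrivial E] {q : ℝ} (hq : 0 < q) :
    ∃ c > 0, ∀ w : E, ∫ u : sphere (0 : E) 1, |⟪w, u⟫| ^ q ∂σ = c * ‖w‖ ^ q := by
  obtain ⟨v, hv⟩ := NormedSpace.sphere_nonempty_rclike (𝕜 := ℝ) (E := E) zero_le_one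
  set c := ∫ u : sphere (0 : E) 1, |⟪v, u⟫| ^ q ∂σ
  have hv' : ‖v‖ = 1 := by simpa using hv
  have hcont : Continuous fun u : sphere (0 : E) 1 => |⟪v, u⟫| ^ q :=
    (by fun_prop : Continuous fun u : sphere (0 : E) 1 => |⟪v, u⟫|).rpow_const
      fun _ => .inr hq.le
  refine ⟨c, integral_pos_of_integrable_nonneg_nonzero (x := ⟨v, hv⟩) hcont
    hcont.integrable_toSphere (fun u => by positivity) (by simp [hv']), fun w => ?_⟩
  rcases eq_or_ne w 0 with rfl | hw
  · simp [Real.zero_rpow hq.ne']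
  have hw' : ‖‖w‖⁻¹ • w‖ = 1 := by simp [norm_smul, hw]
  calc ∫ u : sphere (0 : E) 1, |⟪w, u⟫| ^ q ∂σ
      = ∫ u : sphere (0 : E) 1, ‖w‖ ^ q * |⟪‖w‖⁻¹ • w, u⟫| ^ q ∂σ := by
        congr 1 with u
        rw [real_inner_smul_left, abs_mul, Real.mul_rpow (by positivity) (abs_nonneg _),
          ← mul_assoc, abs_inv, abs_norm, ← Real.mul_rpow (by positivity) (by positivity),
          mul_inv_cancel₀ (norm_ne_zero_iff.mpr hw), Real.one_rpow, one_mul]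
    _ = c * ‖w‖ ^ q := by
        rw [integral_const_mul, integral_comp_inner_sphere_eq (|·| ^ q) hw' hv', mul_comm]

theorem rpow_sub_one_mul_integral_abs_inner_le {p : ℝ} (hp : p ≤ 1) {w : E}
    {f : sphere (0 : E) 1 → ℝ} (hf : Continuous f) (hf_pos : ∀ u, 0 < f u)
    (hf_le : ∀ u, f u ≤ ‖w‖) :
    ‖w‖ ^ (p - 1) * ∫ u : sphere (0 : E) 1, |⟪w, u⟫| ∂σ ≤
      ∫ u : sphere (0 : E) 1, f u ^ (p - 1) * |⟪w, u⟫| ∂σ := by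
  rw [← integral_const_mul]
  refine integral_mono (Continuous.integrable_toSphere (by fun_prop))
    ((hf.rpow_const fun u => .inl (hf_pos u).ne').mul (by fun_prop)).integrable_toSphere fun u => ?_
  exact mul_le_mul_of_nonneg_right
    (Real.rpow_le_rpow_of_nonpos (hf_pos u) (hf_le u) (by linarith)) (abs_nonneg _)

theorem integral_abs_inner_rpow_le {p : ℝ} (hp : 1 ≤ p) {w : E}
    {f : sphere (0 : E) 1 → ℝ} (hf : Continuous f) (hf_nonneg : ∀ u, 0 ≤ f u)
    (hf_width : ∀ u : sphere (0 : E) 1, |⟪w, u⟫| ≤ f u + f (-u)) :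
    ∫ u : sphere (0 : E) 1, |⟪w, u⟫| ^ p ∂σ ≤
      2 ^ p * ∫ u : sphere (0 : E) 1, f u ^ (p - 1) * |⟪w, u⟫| ∂σ := by
  have hF : Continuous fun u => f u ^ (p - 1) := hf.rpow_const fun _ => .inr (by linarith)
  have hFw : Continuous fun u : sphere (0 : E) 1 => f u ^ (p - 1) * |⟪w, u⟫| := by fun_prop
  have hFw_neg : Continuous fun u : sphere (0 : E) 1 => f (-u) ^ (p - 1) * |⟪w, u⟫| :=
    (hF.comp continuous_neg).mul (by fun_prop)
  have hsymm : ∫ u : sphere (0 : E) 1, f (-u) ^ (p - 1) * |⟪w, u⟫| ∂σ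
      = ∫ u : sphere (0 : E) 1, f u ^ (p - 1) * |⟪w, u⟫| ∂σ := by
    simpa using integral_comp_neg_sphere fun u => f u ^ (p - 1) * |⟪w, u⟫|
  calc ∫ u : sphere (0 : E) 1, |⟪w, u⟫| ^ p ∂σ
      ≤ ∫ u : sphere (0 : E) 1, 2 ^ (p - 1) * (f u ^ (p - 1) * |⟪w, u⟫| +
          f (-u) ^ (p - 1) * |⟪w, u⟫|) ∂σ := by
        refine integral_mono ?_ ?_ fun u => ?_
        · exact Continuous.integrable_toSphere
            ((by fun_prop : Continuous fun u : sphere (0 : E) 1 => |⟪w, u⟫|).rpow_const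
              fun _ => .inr (by linarith))
        · exact Continuous.integrable_toSphere (by fun_prop)
        · rw [← add_mul, ← mul_assoc]
          exact Real.rpow_le_two_rpow_mul_add_mul hp (hf_nonneg u) (hf_nonneg (-u))
            (abs_nonneg _) (hf_width u)
    _ = 2 ^ p * ∫ u : sphere (0 : E) 1, f u ^ (p - 1) * |⟪w, u⟫| ∂σ := by
        rw [integral_const_mul, integral_add hFw.integrable_toSphere hFw_neg.integrable_toSphere,
          hsymm, ← two_mul, ← mul_assoc, ← Real.rpow_add_one two_ne_zero, sub_add_cancel]

theorem exists_rpow_norm_le_integral [Nontrivial E] {p : ℝ} (hp : 0 < p) :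
    ∃ γ > 0, ∀ (w : E) (f : sphere (0 : E) 1 → ℝ), Continuous f → (∀ u, 0 < f u) →
      (∀ u, f u ≤ ‖w‖) → (∀ u : sphere (0 : E) 1, |⟪w, u⟫| ≤ f u + f (-u)) →
      γ * ‖w‖ ^ p ≤ ∫ u : sphere (0 : E) 1, f u ^ (p - 1) * |⟪w, u⟫| ∂σ := by
  rcases le_or_gt p 1 with hp1 | hp1
  · obtain ⟨c, hc, hcw⟩ := exists_integral_abs_inner_rpow_eq (E := E) one_pos
    refine ⟨c, hc, fun w f hf hf_pos hf_le _ => ?_⟩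
    have key := rpow_sub_one_mul_integral_abs_inner_le hp1 hf hf_pos hf_le
    simp only [Real.rpow_one] at hcw
    rwa [hcw, mul_left_comm, ← Real.rpow_add_one' (norm_nonneg w) (by linarith),
      sub_add_cancel] at key
  · obtain ⟨c, hc, hcw⟩ := exists_integral_abs_inner_rpow_eq (E := E) hp
    refine ⟨c / 2 ^ p, by positivity, fun w f hf hf_pos _ hf_width => ?_⟩
    rw [div_mul_eq_mul_div, div_le_iff₀ (by positivity), ← hcw, mul_comm]
    exact integral_abs_inner_rpow_le hp1.le hf (fun u => (hf_pos u).le) hf_width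

end Sphere

section SupportFunction

variable {n : ℕ} {K : Set (EuclideanSpace ℝ (Fin n))}

local notation "ℝⁿ" => EuclideanSpace ℝ (Fin n)

theorem inner_le_suppFn (hK : IsCompact K) {z : ℝⁿ} (hz : z ∈ K) (u : ℝⁿ) :
    ⟪z, u⟫ ≤ suppFn K u :=
  le_csSup (hK.image (by fun_prop)).bddAbove ⟨z, hz, rfl⟩

theorem continuous_suppFn (hK : IsCompact K) : Continuous (suppFn K) :=
  hK.continuous_sSup (f := fun u y => ⟪y, u⟫) (by fun_prop)

theorem suppFn_sub_inner_le_diam_mul_norm (hK : IsCompact K) {x : ℝⁿ} (hx : x ∈ K)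
    (u : ℝⁿ) :
    suppFn K u - ⟪x, u⟫ ≤ diam K * ‖u‖ := by
  suffices suppFn K u ≤ ⟪x, u⟫ + diam K * ‖u‖ by linarith
  refine csSup_le ((show K.Nonempty from ⟨x, hx⟩).image _) ?_
  rintro _ ⟨z, hz, rfl⟩
  have hzx : ⟪z - x, u⟫ ≤ diam K * ‖u‖ :=
    (real_inner_le_norm _ _).trans (by
      gcongr
      exact (dist_eq_norm z x).symm ▸ dist_le_diam_of_mem hK.isBounded hz hx)
  rw [inner_sub_left] at hzx
  linarith

theorem suppFn_sub_inner_pos (hK : IsCompact K) {x : ℝⁿ} (hx : x ∈ interior K) {u : ℝⁿ}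
    (hu : u ≠ 0) :
    0 < suppFn K u - ⟪x, u⟫ := by
  have hnhds : ∀ᶠ t in 𝓝 (0 : ℝ), x + t • u ∈ K :=
    (by fun_prop : Continuous fun t : ℝ => x + t • u).tendsto' 0 x (by simp)
      (mem_interior_iff_mem_nhds.mp hx)
  obtain ⟨t, htK, ht⟩ :=
    ((hnhds.filter_mono nhdsWithin_le_nhds).and (self_mem_nhdsWithin (s := Ioi 0))).exists
  have := inner_le_suppFn hK htK u
  rw [inner_add_left, real_inner_smul_left, real_inner_self_eq_norm_sq] at this
  have : 0 < t * ‖u‖ ^ 2 := mul_pos ht (by positivity)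
  linarith

theorem abs_inner_sub_le_suppFn_sub_add (hK : IsCompact K) {z₁ z₂ : ℝⁿ} (hz₁ : z₁ ∈ K)
    (hz₂ : z₂ ∈ K) (u : ℝⁿ) :
    |⟪z₂ - z₁, u⟫| ≤ (suppFn K u - ⟪z₁, u⟫) + (suppFn K u - ⟪z₂, u⟫) := by
  have := inner_le_suppFn hK hz₁ u
  have := inner_le_suppFn hK hz₂ u
  rw [inner_sub_left, abs_le]
  constructor <;> linarith

theorem abs_inner_sub_le_suppFn_sub_add_suppFn_neg (hK : IsCompact K) {z₁ z₂ : ℝⁿ} (hz₁ : z₁ ∈ K)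
    (hz₂ : z₂ ∈ K) (x u : ℝⁿ) :
    |⟪z₂ - z₁, u⟫| ≤ (suppFn K u - ⟪x, u⟫) + (suppFn K (-u) - ⟪x, -u⟫) := by
  have := inner_le_suppFn hK hz₁ u
  have := inner_le_suppFn hK hz₂ u
  have := inner_le_suppFn hK hz₁ (-u)
  have := inner_le_suppFn hK hz₂ (-u)
  simp only [inner_neg_right] at *
  rw [inner_sub_left, abs_le]
  constructor <;> linarith

theorem continuous_suppFn_sub_inner_sphere (hK : IsCompact K) (x : ℝⁿ) :
    Continuous fun u : sphere (0 : ℝⁿ) 1 => suppFn K u - ⟪x, u⟫ :=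
  ((continuous_suppFn hK).comp continuous_subtype_val).sub (by fun_prop)

theorem integral_rpow_mul_suppFn_sub_inner (hK : IsCompact K) {x : ℝⁿ} (hx : x ∈ interior K)
    {p : ℝ}
    (hc : ∫ u : sphere (0 : ℝⁿ) 1, (suppFn K u - ⟪x, u⟫) ^ (p - 1) • (u : ℝⁿ) ∂sphMeasure n = 0)
    (y : ℝⁿ) :
    ∫ u : sphere (0 : ℝⁿ) 1, (suppFn K u - ⟪x, u⟫) ^ (p - 1) * (suppFn K u - ⟪y, u⟫) ∂sphMeasure n =
      ∫ u : sphere (0 : ℝⁿ) 1, (suppFn K u - ⟪x, u⟫) ^ p ∂sphMeasure n := by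
  unfold sphMeasure at hc ⊢
  set f : sphere (0 : ℝⁿ) 1 → ℝ := fun u => suppFn K u - ⟪x, u⟫
  have hf_pos : ∀ u, 0 < f u := fun u =>
    suppFn_sub_inner_pos hK hx (ne_zero_of_mem_unit_sphere u)
  have hf : Continuous f := continuous_suppFn_sub_inner_sphere hK x
  have hF : Continuous fun u => f u ^ (p - 1) := hf.rpow_const fun u => .inl (hf_pos u).ne'
  have hFu : Continuous fun u : sphere (0 : ℝⁿ) 1 => f u ^ (p - 1) • (u : ℝⁿ) := by fun_prop
  have hFp : Continuous fun u => f u ^ p := hf.rpow_const fun u => .inl (hf_pos u).ne'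
  have hcentre : ∫ u : sphere (0 : ℝⁿ) 1, f u ^ (p - 1) * ⟪x - y, u⟫ ∂volume.toSphere = 0 := by
    simp_rw [← real_inner_smul_right]
    rw [integral_inner hFu.integrable_toSphere, hc, inner_zero_right]
  calc ∫ u : sphere (0 : ℝⁿ) 1, f u ^ (p - 1) * (suppFn K u - ⟪y, u⟫) ∂volume.toSphere
      = ∫ u : sphere (0 : ℝⁿ) 1, (f u ^ p + f u ^ (p - 1) * ⟪x - y, u⟫) ∂volume.toSphere := by
        congr 1 with u
        rw [inner_sub_left, ← sub_add_cancel p 1, Real.rpow_add_one (hf_pos u).ne',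
          add_sub_cancel_right]
        simp only [f]
        ring
    _ = ∫ u : sphere (0 : ℝⁿ) 1, f u ^ p ∂volume.toSphere := by
        rw [integral_add hFp.integrable_toSphere (Continuous.integrable_toSphere (by fun_prop)),
          hcentre, add_zero]

theorem integral_rpow_mul_abs_inner_sub_le (hK : IsCompact K) {x : ℝⁿ} (hx : x ∈ interior K)
    {p : ℝ}
    (hc : ∫ u : sphere (0 : ℝⁿ) 1, (suppFn K u - ⟪x, u⟫) ^ (p - 1) • (u : ℝⁿ) ∂sphMeasure n = 0)
    {z₁ z₂ : ℝⁿ} (hz₁ : z₁ ∈ K) (hz₂ : z₂ ∈ K) :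
    ∫ u : sphere (0 : ℝⁿ) 1, (suppFn K u - ⟪x, u⟫) ^ (p - 1) * |⟪z₂ - z₁, u⟫| ∂sphMeasure n ≤
      2 * ∫ u : sphere (0 : ℝⁿ) 1, (suppFn K u - ⟪x, u⟫) ^ p ∂sphMeasure n := by
  have hF : Continuous fun u : sphere (0 : ℝⁿ) 1 => (suppFn K u - ⟪x, u⟫) ^ (p - 1) :=
    (continuous_suppFn_sub_inner_sphere hK x).rpow_const
      fun u => .inl (suppFn_sub_inner_pos hK hx (ne_zero_of_mem_unit_sphere u)).ne'
  have hint : ∀ z : ℝⁿ, Integrable (fun u : sphere (0 : ℝⁿ) 1 =>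
      (suppFn K u - ⟪x, u⟫) ^ (p - 1) * (suppFn K u - ⟪z, u⟫)) (sphMeasure n) := fun z =>
    (hF.mul (continuous_suppFn_sub_inner_sphere hK z)).integrable_toSphere
  calc ∫ u : sphere (0 : ℝⁿ) 1, (suppFn K u - ⟪x, u⟫) ^ (p - 1) * |⟪z₂ - z₁, u⟫| ∂sphMeasure n
      ≤ ∫ u : sphere (0 : ℝⁿ) 1, ((suppFn K u - ⟪x, u⟫) ^ (p - 1) * (suppFn K u - ⟪z₁, u⟫) +
          (suppFn K u - ⟪x, u⟫) ^ (p - 1) * (suppFn K u - ⟪z₂, u⟫)) ∂sphMeasure n := by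
        refine integral_mono (Continuous.integrable_toSphere (by fun_prop))
          ((hint z₁).add (hint z₂)) fun u => ?_
        rw [← mul_add]
        exact mul_le_mul_of_nonneg_left (abs_inner_sub_le_suppFn_sub_add hK hz₁ hz₂ u)
          (Real.rpow_nonneg (suppFn_sub_inner_pos hK hx (ne_zero_of_mem_unit_sphere u)).le _)
    _ = 2 * ∫ u : sphere (0 : ℝⁿ) 1, (suppFn K u - ⟪x, u⟫) ^ p ∂sphMeasure n := by
        rw [integral_add (hint z₁) (hint z₂), integral_rpow_mul_suppFn_sub_inner hK hx hc,
          integral_rpow_mul_suppFn_sub_inner hK hx hc, two_mul]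

end SupportFunction

theorem statement_6_general {n : ℕ} (hn : 2 ≤ n) (p : ℝ) (hp : 0 < p) (a : ℝ) :
    ∃ D : ℝ, ∀ (K : Set (EuclideanSpace ℝ (Fin n))),
      IsCompact K → Convex ℝ K → (interior K).Nonempty → volume K = volume (ball (0 : EuclideanSpace ℝ (Fin n)) 1) →
      ∀ x ∈ interior K,
        (∫ u : sphere (0 : EuclideanSpace ℝ (Fin n)) 1, ((suppFn K u - (inner ℝ x (u : EuclideanSpace ℝ (Fin n)) : ℝ)) ^ (p - 1)) • (u : EuclideanSpace ℝ (Fin n)) ∂(sphMeasure n)) = 0 →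
        (∫ u : sphere (0 : EuclideanSpace ℝ (Fin n)) 1, (suppFn K u - (inner ℝ x (u : EuclideanSpace ℝ (Fin n)) : ℝ)) ^ (p) ∂(sphMeasure n)) ≤ a →
        Metric.diam K ≤ D := by
  have : Nonempty (Fin n) := ⟨⟨0, by omega⟩⟩
  obtain ⟨γ, hγ, hlower⟩ := exists_rpow_norm_le_integral (E := EuclideanSpace ℝ (Fin n)) hp
  refine ⟨(2 * a / γ) ^ p⁻¹, fun K hK _ _ _ x hx hc ha => ?_⟩
  obtain ⟨z₁, hz₁, z₂, hz₂, hdiam⟩ := hK.exists_dist_eq_diam ⟨x, interior_subset hx⟩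
  have hw : ‖z₂ - z₁‖ = diam K := by rw [← dist_eq_norm, dist_comm, hdiam]
  have key : γ * diam K ^ p ≤ 2 * a := by
    calc γ * diam K ^ p = γ * ‖z₂ - z₁‖ ^ p := by rw [hw]
      _ ≤ ∫ u : sphere (0 : EuclideanSpace ℝ (Fin n)) 1,
            (suppFn K u - ⟪x, u⟫) ^ (p - 1) * |⟪z₂ - z₁, u⟫| ∂sphMeasure n :=
        hlower _ _ (continuous_suppFn_sub_inner_sphere hK x)
          (fun u => suppFn_sub_inner_pos hK hx (ne_zero_of_mem_unit_sphere u))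
          (fun u => by
            simpa [hw] using suppFn_sub_inner_le_diam_mul_norm hK (interior_subset hx) u)
          (fun u => by simpa using abs_inner_sub_le_suppFn_sub_add_suppFn_neg hK hz₁ hz₂ x u)
      _ ≤ 2 * a := by linarith [integral_rpow_mul_abs_inner_sub_le hK hx hc hz₁ hz₂]
  have hdiam_pow : 0 ≤ γ * diam K ^ p := by positivity
  rw [Real.le_rpow_inv_iff_of_pos diam_nonneg (div_nonneg (by linarith) hγ.le) hp,
    le_div_iff₀ hγ]
  linarith

/-- for `n ≥ 2`, `p ∈ (0,∞)`, `p ≠ 1` and `0 < a < ∞`, there is `D = D(n,p,a)`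
such that every convex body `K` with `V(K) = ω_n` admitting an interior point `x` with
`∫ (h_K(u) - ⟨x,u⟩)^(p-1) u dσ(u) = 0` and `∫ (h_K(u) - ⟨x,u⟩)^p dσ(u) ≤ a`
has diameter at most `D`. -/
theorem statement_6 {n : ℕ} (hn : 2 ≤ n) (p : ℝ) (hp : 0 < p) (hp1 : p ≠ 1) (a : ℝ) (ha : 0 < a) :
    ∃ D : ℝ, ∀ (K : Set (EuclideanSpace ℝ (Fin n))),
      IsCompact K → Convex ℝ K → (interior K).Nonempty → volume K = volume (ball (0 : EuclideanSpace ℝ (Fin n)) 1) →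
      ∀ x ∈ interior K,
        (∫ u : sphere (0 : EuclideanSpace ℝ (Fin n)) 1, ((suppFn K u - (inner ℝ x (u : EuclideanSpace ℝ (Fin n)) : ℝ)) ^ (p - 1)) • (u : EuclideanSpace ℝ (Fin n)) ∂(sphMeasure n)) = 0 →
        (∫ u : sphere (0 : EuclideanSpace ℝ (Fin n)) 1, (suppFn K u - (inner ℝ x (u : EuclideanSpace ℝ (Fin n)) : ℝ)) ^ (p) ∂(sphMeasure n)) ≤ a →
        Metric.diam K ≤ D :=
  statement_6_general hn p hp a
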